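/- Let F, F^k : ℝ^d → ℝ be μ-smooth (gradients μ-Lipschitz) functions with ‖∇F(w)‖ ≤ L for all w, and suppose random vectors v_k satisfy E‖w − v_k‖ ≤ δ_k. If ∇F(w) = Σ_{k=1}^Q p_k ∇F^k(w) with p_k ≥ 0, Σ p_k = 1, then ∇F(w)ᵀ(Σ_k p_k E[∇F^k(v_k)]) ≥ ‖∇F(w)‖² − L·μ·Σ_k p_k δ_k. -/

import Mathlib

/-!
Since `∇F(w) = ∑ pₖ ∇Fᵏ(w)`, the pairing equals `‖∇F(w)‖²` plus
`⟪∇F(w), ∑ pₖ (𝔼 ∇Fᵏ(vₖ) - ∇Fᵏ(w))⟫`. By Jensen and smoothness each bias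
`𝔼 ∇Fᵏ(vₖ) - ∇Fᵏ(w)` has norm at most `μ 𝔼 ‖w - vₖ‖ ≤ μ δₖ`, so Cauchy–Schwarz and
`‖∇F(w)‖ ≤ L` bound the error term by `L μ ∑ pₖ δₖ`.
-/

open MeasureTheory

theorem norm_sq_sub_le_real_inner_sum_smul {E ι : Type*} [NormedAddCommGroup E]
    [InnerProductSpace ℝ E] [Fintype ι] (p : ι → ℝ) (hp : ∀ k, 0 ≤ p k) (a b : ι → E)
    (g : E) (hg : g = ∑ k, p k • b k) :
    ‖g‖ ^ 2 - ‖g‖ * ∑ k, p k * ‖a k - b k‖ ≤ inner ℝ g (∑ k, p k • a k) := by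
  have hsplit : ∑ k, p k • a k = g + ∑ k, p k • (a k - b k) := by
    simp only [hg, smul_sub, Finset.sum_sub_distrib, add_sub_cancel]
  have hdev : ‖∑ k, p k • (a k - b k)‖ ≤ ∑ k, p k * ‖a k - b k‖ :=
    (norm_sum_le _ _).trans_eq <| Finset.sum_congr rfl fun k _ => by
      rw [norm_smul, Real.norm_of_nonneg (hp k)]
  rw [hsplit, inner_add_right, real_inner_self_eq_norm_sq]
  have hcs := neg_le_of_abs_le (abs_real_inner_le_norm g (∑ k, p k • (a k - b k)))
  nlinarith [mul_le_mul_of_nonneg_left hdev (norm_nonneg g)]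

theorem norm_integral_comp_sub_le_of_norm_sub_le {Ω E F : Type*} [MeasurableSpace Ω]
    {P : Measure Ω} [IsProbabilityMeasure P] [NormedAddCommGroup E] [NormedAddCommGroup F]
    [NormedSpace ℝ F] [CompleteSpace F] {g : E → F} {μ : ℝ}
    (hg : ∀ x y, ‖g x - g y‖ ≤ μ * ‖x - y‖)
    {v : Ω → E} (w : E) (hgv : Integrable (fun ω => g (v ω)) P)
    (hv : Integrable (fun ω => ‖w - v ω‖) P) :
    ‖∫ ω, g (v ω) ∂P - g w‖ ≤ μ * ∫ ω, ‖w - v ω‖ ∂P := by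
  have hmean : ∫ ω, g (v ω) ∂P - g w = ∫ ω, (g (v ω) - g w) ∂P := by
    rw [integral_sub hgv (integrable_const _), integral_const, probReal_univ, one_smul]
  rw [hmean, ← integral_const_mul]
  calc ‖∫ ω, (g (v ω) - g w) ∂P‖
      ≤ ∫ ω, ‖g (v ω) - g w‖ ∂P := norm_integral_le_integral_norm _
    _ ≤ ∫ ω, μ * ‖w - v ω‖ ∂P :=
        integral_mono_of_nonneg (.of_forall fun _ => norm_nonneg _) (hv.const_mul μ)
          (.of_forall fun ω => by simpa only [norm_sub_rev w] using hg (v ω) w)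

theorem gradient_inner_product_bias_bound_general {Ω : Type*} [MeasurableSpace Ω]
    (μprob : Measure Ω) [IsProbabilityMeasure μprob] (d Q : ℕ)
    (F : EuclideanSpace ℝ (Fin d) → ℝ) (Fk : Fin Q → EuclideanSpace ℝ (Fin d) → ℝ)
    (μ L : ℝ) (hμ : 0 < μ) (hL : 0 ≤ L)
    (hFksmooth : ∀ k, ∀ x y, ‖gradient (Fk k) x - gradient (Fk k) y‖ ≤ μ * ‖x - y‖)
    (hFbdd : ∀ x, ‖gradient F x‖ ≤ L)
    (p : Fin Q → ℝ) (hp : ∀ k, 0 ≤ p k)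
    (hdecomp : ∀ x, gradient F x = ∑ k, p k • gradient (Fk k) x)
    (w : EuclideanSpace ℝ (Fin d)) (v : Fin Q → Ω → EuclideanSpace ℝ (Fin d))
    (δ : Fin Q → ℝ)
    (hvint : ∀ k, Integrable (fun ω => gradient (Fk k) (v k ω)) μprob)
    (hdint : ∀ k, Integrable (fun ω => ‖w - v k ω‖) μprob)
    (hdrift : ∀ k, (∫ ω, ‖w - v k ω‖ ∂μprob) ≤ δ k) :
    (inner ℝ (gradient F w) (∑ k, p k • ∫ ω, gradient (Fk k) (v k ω) ∂μprob) : ℝ) ≥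
      ‖gradient F w‖ ^ 2 - L * μ * ∑ k, p k * δ k := by
  have hbias : ∀ k,
      ‖∫ ω, gradient (Fk k) (v k ω) ∂μprob - gradient (Fk k) w‖ ≤ μ * δ k := fun k =>
    (norm_integral_comp_sub_le_of_norm_sub_le (hFksmooth k) w (hvint k) (hdint k)).trans
      (mul_le_mul_of_nonneg_left (hdrift k) hμ.le)
  have hdrift_term : ‖gradient F w‖ *
      ∑ k, p k * ‖∫ ω, gradient (Fk k) (v k ω) ∂μprob - gradient (Fk k) w‖ ≤
        L * μ * ∑ k, p k * δ k :=
    calc _ ≤ L * ∑ k, p k * (μ * δ k) :=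
          mul_le_mul (hFbdd w)
            (Finset.sum_le_sum fun k _ => mul_le_mul_of_nonneg_left (hbias k) (hp k))
            (Finset.sum_nonneg fun k _ => mul_nonneg (hp k) (norm_nonneg _)) hL
      _ = L * μ * ∑ k, p k * δ k := by
          simp only [Finset.mul_sum]
          exact Finset.sum_congr rfl fun k _ => by ring
  exact le_trans (by linarith)
    (norm_sq_sub_le_real_inner_sum_smul p hp _ _ _ (hdecomp w))

theorem gradient_inner_product_bias_bound {Ω : Type*} [MeasurableSpace Ω]
    (μprob : Measure Ω) [IsProbabilityMeasure μprob] (d Q : ℕ)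
    (F : EuclideanSpace ℝ (Fin d) → ℝ) (Fk : Fin Q → EuclideanSpace ℝ (Fin d) → ℝ)
    (μ L : ℝ) (hμ : 0 < μ) (hL : 0 ≤ L)
    (hFsmooth : ∀ x y, ‖gradient F x - gradient F y‖ ≤ μ * ‖x - y‖)
    (hFksmooth : ∀ k, ∀ x y, ‖gradient (Fk k) x - gradient (Fk k) y‖ ≤ μ * ‖x - y‖)
    (hFbdd : ∀ x, ‖gradient F x‖ ≤ L)
    (p : Fin Q → ℝ) (hp : ∀ k, 0 ≤ p k) (hpsum : ∑ k, p k = 1)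
    (hdecomp : ∀ x, gradient F x = ∑ k, p k • gradient (Fk k) x)
    (w : EuclideanSpace ℝ (Fin d)) (v : Fin Q → Ω → EuclideanSpace ℝ (Fin d))
    (δ : Fin Q → ℝ)
    (hvint : ∀ k, Integrable (fun ω => gradient (Fk k) (v k ω)) μprob)
    (hdint : ∀ k, Integrable (fun ω => ‖w - v k ω‖) μprob)
    (hdrift : ∀ k, (∫ ω, ‖w - v k ω‖ ∂μprob) ≤ δ k) :
    (inner ℝ (gradient F w) (∑ k, p k • ∫ ω, gradient (Fk k) (v k ω) ∂μprob) : ℝ) ≥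
      ‖gradient F w‖ ^ 2 - L * μ * ∑ k, p k * δ k :=
  gradient_inner_product_bias_bound_general μprob d Q F Fk μ L hμ hL hFksmooth hFbdd p hp hdecomp w
    v δ hvint hdint hdrift
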